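/- Let T_n be the sequence of polynomials defined by T_0(x) = x and T_n(x) = (1 - x²)·T_{n-1}'(x) for n ≥ 1. Then for every real x with |x| < 1 and every complex (or real) z in a sufficiently small neighborhood of 0, the generating function satisfies Σ_{n≥0} T_n(x) z^n / n! = (sinh z + x cosh z)/(cosh z + x sinh z). -/

import Mathlib

open Polynomial Real

noncomputable def T : ℕ → Polynomial ℚ
  | 0 => Polynomial.X
  | n + 1 => (1 - Polynomial.X ^ 2) * Polynomial.derivative (T n)

/-!
The function `f z = (sinh z + x cosh z) / (cosh z + x sinh z)` solves the Riccati equation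
`f' = 1 - f²` with `f 0 = x`. Differentiating `f^{(n)} = T_n ∘ f` once more gives
`f^{(n+1)} = (T_n' ∘ f) · (1 - f²) = T_{n+1} ∘ f`, so `f^{(n)}(0) = T_n(x)`, and since `f` is
analytic at `0` it is the sum of its Taylor series near `0`.
-/

open Filter Topology

theorem iteratedDeriv_eq_aeval_T_of_hasDerivAt {𝕜 : Type*} [NontriviallyNormedField 𝕜]
    [Algebra ℚ 𝕜] {f : 𝕜 → 𝕜} {U : Set 𝕜} (hU : IsOpen U)
    (hf : ∀ z ∈ U, HasDerivAt f (1 - f z ^ 2) z) (n : ℕ) :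
    ∀ z ∈ U, iteratedDeriv n f z = aeval (f z) (T n) := by
  induction n with
  | zero => intro z _; simp [T]
  | succ n ih =>
    intro z hz
    have hloc : iteratedDeriv n f =ᶠ[𝓝 z] fun w => aeval (f w) (T n) :=
      eventually_of_mem (hU.mem_nhds hz) ih
    have hderiv : HasDerivAt (fun w => aeval (f w) (T n))
        (aeval (f z) (derivative (T n)) * (1 - f z ^ 2)) z :=
      ((T n).hasDerivAt_aeval (f z)).comp z (hf z hz)
    rw [iteratedDeriv_succ, hloc.deriv_eq, hderiv.deriv, T]
    simp only [map_mul, map_sub, map_one, map_pow, aeval_X]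
    ring

theorem AnalyticAt.eventually_hasSum_iteratedDeriv {𝕜 : Type*} [NontriviallyNormedField 𝕜]
    [CompleteSpace 𝕜] [CharZero 𝕜] {f : 𝕜 → 𝕜} {x : 𝕜} (hf : AnalyticAt 𝕜 f x) :
    ∀ᶠ y in 𝓝 0, HasSum (fun n => iteratedDeriv n f x * y ^ n / n.factorial) (f (x + y)) := by
  filter_upwards [hf.hasFPowerSeriesAt.eventually_hasSum] with y hy
  simp only [FormalMultilinearSeries.ofScalars_apply_eq, smul_eq_mul] at hy
  simpa only [mul_div_right_comm] using hy

-- For `|x| < 1` this is `tanh (z + artanh x)`.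
noncomputable def tanhShift (x z : ℝ) : ℝ :=
  (sinh z + x * cosh z) / (cosh z + x * sinh z)

theorem tanhShift_zero (x : ℝ) : tanhShift x 0 = x := by
  simp [tanhShift]

theorem hasDerivAt_tanhShift {x z : ℝ} (hz : cosh z + x * sinh z ≠ 0) :
    HasDerivAt (tanhShift x) (1 - tanhShift x z ^ 2) z := by
  have hnum : HasDerivAt (fun w => sinh w + x * cosh w) (cosh z + x * sinh z) z :=
    (hasDerivAt_sinh z).add ((hasDerivAt_cosh z).const_mul x)
  have hden : HasDerivAt (fun w => cosh w + x * sinh w) (sinh z + x * cosh z) z :=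
    (hasDerivAt_cosh z).add ((hasDerivAt_sinh z).const_mul x)
  refine (hnum.div hden hz).congr_deriv ?_
  rw [tanhShift, div_pow]
  field_simp

theorem analyticAt_tanhShift {x z : ℝ} (hz : cosh z + x * sinh z ≠ 0) :
    AnalyticAt ℝ (tanhShift x) z :=
  (analyticAt_sinh.add (analyticAt_const.mul analyticAt_cosh)).div
    (analyticAt_cosh.add (analyticAt_const.mul analyticAt_sinh)) hz

theorem iteratedDeriv_tanhShift_zero (x : ℝ) (n : ℕ) :
    iteratedDeriv n (tanhShift x) 0 = aeval x (T n) := by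
  let U := {z : ℝ | cosh z + x * sinh z ≠ 0}
  have hU : IsOpen U := isOpen_ne.preimage (by fun_prop)
  have h0 : (0 : ℝ) ∈ U := by simp [U]
  rw [iteratedDeriv_eq_aeval_T_of_hasDerivAt hU (fun z hz => hasDerivAt_tanhShift hz) n 0 h0,
    tanhShift_zero]

theorem generating_function_T (x : ℝ) :
    ∃ ε > (0 : ℝ), ∀ z : ℝ, |z| < ε →
      HasSum (fun n : ℕ => (Polynomial.aeval x (T n)) * z ^ n / (Nat.factorial n))
        ((Real.sinh z + x * Real.cosh z) / (Real.cosh z + x * Real.sinh z)) := by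
  have hanalytic : AnalyticAt ℝ (tanhShift x) 0 := analyticAt_tanhShift (by simp)
  obtain ⟨ε, hε, hsum⟩ := Metric.eventually_nhds_iff.mp hanalytic.eventually_hasSum_iteratedDeriv
  refine ⟨ε, hε, fun z hz => ?_⟩
  have hz_sum := hsum (show dist z 0 < ε by rwa [Real.dist_0_eq_abs])
  simpa only [iteratedDeriv_tanhShift_zero, zero_add, tanhShift] using hz_sum
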